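/- For all nonnegative integers n and l with l ≤ n, and all real x, λ, the degenerate Stirling polynomials of the second kind satisfy S_{2,λ}(n, l | x) = Σ_{i=l}^{n} C(n,i) (x)_{n-i,λ} S_{2,λ}(i, l). -/
import Mathlib

open Finset

def degFall (l x : ℝ) (n : ℕ) : ℝ := ∏ i ∈ Finset.range n, (x - i * l)

def fall (x : ℝ) (n : ℕ) : ℝ := ∏ i ∈ Finset.range n, (x - i)

lemma degFall_succ (l z : ℝ) (n : ℕ) : degFall l z (n + 1) = degFall l z n * (z - n * l) :=
  Finset.prod_range_succ _ _

lemma degFall_zero (l z : ℝ) : degFall l z 0 = 1 := Finset.prod_range_zero _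

lemma degFall_add_binomial (l x y : ℝ) (n : ℕ) :
    degFall l (y + x) n
      = ∑ i ∈ Finset.range (n + 1), (n.choose i : ℝ) * degFall l x (n - i) * degFall l y i := by
  induction n with
  | zero => simp [degFall]
  | succ n ih =>
    rw [degFall_succ, ih, Finset.sum_mul]
    have key : ∀ i ∈ Finset.range (n + 1),
        (n.choose i : ℝ) * degFall l x (n - i) * degFall l y i * (y + x - n * l)
        = (n.choose i : ℝ) * degFall l x (n + 1 - i) * degFall l y i
          + (n.choose i : ℝ) * degFall l x (n - i) * degFall l y (i + 1) := by
      intro i hi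
      have hi' : i ≤ n := by simpa [Nat.lt_succ_iff] using hi
      have h1 : n + 1 - i = (n - i) + 1 := by omega
      rw [h1, degFall_succ, degFall_succ]
      have hc : ((n - i : ℕ) : ℝ) = (n : ℝ) - (i : ℝ) := by
        rw [Nat.cast_sub hi']
      rw [hc]; ring
    rw [Finset.sum_congr rfl key, Finset.sum_add_distrib]
    -- A := ∑_{i∈range(n+1)} C(n,i) X_{n+1-i} Y_i, B := ∑_{i∈range(n+1)} C(n,i) X_{n-i} Y_{i+1}
    rw [Finset.sum_range_succ' (fun i => ((n + 1).choose i : ℝ) * degFall l x (n + 1 - i) * degFall l y i)]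
    rw [Finset.sum_range_succ' (fun i => (n.choose i : ℝ) * degFall l x (n + 1 - i) * degFall l y i)]
    have hsub : ∀ i : ℕ, n + 1 - (i + 1) = n - i := fun i => by omega
    simp only [Nat.choose_succ_succ, Nat.cast_add, Nat.choose_zero_right, Nat.cast_one,
      Nat.sub_zero, degFall_zero, hsub]
    have expand : ∀ i ∈ Finset.range (n + 1),
        ((n.choose i : ℝ) + (n.choose i.succ : ℝ)) * degFall l x (n - i) * degFall l y (i + 1)
        = (n.choose i : ℝ) * degFall l x (n - i) * degFall l y (i + 1)
          + (n.choose (i + 1) : ℝ) * degFall l x (n - i) * degFall l y (i + 1) := by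
      intro i _; ring
    rw [Finset.sum_congr rfl expand, Finset.sum_add_distrib]
    rw [Finset.sum_range_succ (fun i => (n.choose (i + 1) : ℝ) * degFall l x (n - i) * degFall l y (i + 1))]
    simp only [Nat.choose_succ_self, Nat.cast_zero, zero_mul]
    ring

lemma fall_nat_eq_zero {j k : ℕ} (h : j < k) : fall (j : ℝ) k = 0 := by
  apply Finset.prod_eq_zero (Finset.mem_range.mpr h)
  simp

lemma fall_nat_self_ne_zero (j : ℕ) : fall (j : ℝ) j ≠ 0 := by
  have : (0 : ℝ) < fall (j : ℝ) j := by
    apply Finset.prod_pos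
    intro i hi
    have : i < j := Finset.mem_range.mp hi
    have : (i : ℝ) < j := by exact_mod_cast this
    linarith
  linarith

lemma coeff_unique (m : ℕ) (a b : ℕ → ℝ)
    (h : ∀ y : ℝ, ∑ k ∈ Finset.range (m + 1), a k * fall y k
        = ∑ k ∈ Finset.range (m + 1), b k * fall y k) :
    ∀ j, j ≤ m → a j = b j := by
  intro j
  induction j using Nat.strong_induction_on with
  | _ j ih =>
    intro hj
    have hy := h (j : ℝ)
    have trunc : ∀ c : ℕ → ℝ, ∑ k ∈ Finset.range (m + 1), c k * fall (j : ℝ) k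
        = ∑ k ∈ Finset.range (j + 1), c k * fall (j : ℝ) k := by
      intro c
      refine (Finset.sum_subset ?_ ?_).symm
      · intro k hk
        rw [Finset.mem_range] at hk ⊢
        omega
      · intro k hk hk'
        rw [Finset.mem_range] at hk hk'
        rw [fall_nat_eq_zero (by omega), mul_zero]
    rw [trunc a, trunc b, Finset.sum_range_succ, Finset.sum_range_succ] at hy
    have heq : ∑ k ∈ Finset.range j, a k * fall (j:ℝ) k
        = ∑ k ∈ Finset.range j, b k * fall (j:ℝ) k := by
      apply Finset.sum_congr rfl
      intro k hk
      have hkj := Finset.mem_range.mp hk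
      rw [ih k hkj (by omega)]
    rw [heq] at hy
    have := add_left_cancel hy
    exact mul_right_cancel₀ (fall_nat_self_ne_zero j) this

theorem degenerate_Stirling_polynomial_expansion
    (l x : ℝ) (n lo : ℕ) (hlo : lo ≤ n)
    (S2 : ℕ → ℕ → ℝ) (S2x : ℕ → ℕ → ℝ)
    (hS : ∀ (y : ℝ) (m : ℕ),
      degFall l y m = ∑ k ∈ Finset.range (m + 1), S2 m k * fall y k)
    (hSx : ∀ (y : ℝ) (m : ℕ),
      degFall l (y + x) m = ∑ k ∈ Finset.range (m + 1), S2x m k * fall y k) :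
    S2x n lo = ∑ i ∈ Finset.Icc lo n,
      ((n.choose i : ℕ) : ℝ) * degFall l x (n - i) * S2 i lo := by
  have key : ∀ y : ℝ, ∑ k ∈ Finset.range (n + 1), S2x n k * fall y k
      = ∑ k ∈ Finset.range (n + 1),
          (∑ i ∈ Finset.Icc k n, ((n.choose i : ℕ) : ℝ) * degFall l x (n - i) * S2 i k) * fall y k := by
    intro y
    rw [← hSx y n, degFall_add_binomial]
    calc ∑ i ∈ Finset.range (n + 1), (n.choose i : ℝ) * degFall l x (n - i) * degFall l y i
        = ∑ i ∈ Finset.range (n + 1), ∑ k ∈ Finset.range (i + 1),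
            (n.choose i : ℝ) * degFall l x (n - i) * (S2 i k * fall y k) := by
          refine Finset.sum_congr rfl fun i _ => ?_
          rw [hS y i, Finset.mul_sum]
      _ = ∑ i ∈ Finset.range (n + 1), ∑ k ∈ Finset.range (n + 1),
            (if k ≤ i then (n.choose i : ℝ) * degFall l x (n - i) * (S2 i k * fall y k) else 0) := by
          refine Finset.sum_congr rfl fun i hi => ?_
          have hi' := Finset.mem_range.mp hi
          rw [← Finset.sum_filter]
          refine Finset.sum_congr ?_ fun _ _ => rfl
          ext k
          simp only [Finset.mem_range, Finset.mem_filter]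
          omega
      _ = ∑ k ∈ Finset.range (n + 1), ∑ i ∈ Finset.range (n + 1),
            (if k ≤ i then (n.choose i : ℝ) * degFall l x (n - i) * (S2 i k * fall y k) else 0) :=
          Finset.sum_comm
      _ = ∑ k ∈ Finset.range (n + 1),
            (∑ i ∈ Finset.Icc k n, ((n.choose i : ℕ) : ℝ) * degFall l x (n - i) * S2 i k) * fall y k := by
          refine Finset.sum_congr rfl fun k hk => ?_
          rw [← Finset.sum_filter]
          have hfil : (Finset.range (n + 1)).filter (fun i => k ≤ i) = Finset.Icc k n := by
            ext i
            simp only [Finset.mem_filter, Finset.mem_range, Finset.mem_Icc]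
            omega
          rw [hfil, Finset.sum_mul]
          refine Finset.sum_congr rfl fun i _ => ?_
          ring
  exact coeff_unique n (S2x n)
    (fun k => ∑ i ∈ Finset.Icc k n, ((n.choose i : ℕ) : ℝ) * degFall l x (n - i) * S2 i k)
    key lo hlo
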